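/- arXiv:2407.13582 — 2 statements merged into one kernel-verified Lean document; each statement's English description precedes it below -/
import Mathlib

section
/- Let P_1, P_2 ∈ 𝒫_2(ℝ^d) be continuous distributions (assigning zero probability to every set of Hausdorff dimension less than d), let λ ∈ [0,1], and let π* be an optimal coupling of P_1 and P_2 for the quadratic cost ‖ξ_1−ξ_2‖²₂. Define T_λ : ℝ^d×ℝ^d → ℝ^d by T_λ(ξ_1,ξ_2) = λξ_1 + (1−λ)ξ_2. Then the pushforward (T_λ)_#π* is a 2-Wasserstein barycenter of P_1 and P_2 with weights λ and 1−λ; that is, (T_λ)_#π* minimizes λ·W_2(P,P_1)² + (1−λ)·W_2(P,P_2)² over P ∈ 𝒫_2(ℝ^d). -/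
/-!
Write `C` for the cost of `π*` and `T_λ(x, y) = λx + (1-λ)y`. Through `π*`, the barycenter
candidate `B = (T_λ)_#π*` is coupled to `P₁` at cost `(1-λ)²C` and to `P₂` at cost `λ²C`, so its
objective is at most `λ(1-λ)C`. Conversely, couplings of `(P, P₁)` and `(P, P₂)` can be glued along
`P` into a law of `(x, a, b)` whose `(a, b)`-marginal couples `P₁` and `P₂`. Integrating the identity
`λ‖x-a‖² + (1-λ)‖x-b‖² = ‖x - T_λ(a, b)‖² + λ(1-λ)‖a-b‖²` against this law and using the
optimality of `π*` shows that the objective at `P` is at least `λ(1-λ)C`.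
-/

open MeasureTheory ENNReal Set

noncomputable section

/-- Euclidean space `ℝ^d`. -/
abbrev Eucl (d : ℕ) : Type := EuclideanSpace ℝ (Fin d)

/-- `π` is a coupling of the probability measures `P` and `Q`. -/
def IsCoupling {X : Type*} [MeasurableSpace X]
    (π : Measure (X × X)) (P Q : Measure X) : Prop :=
  IsProbabilityMeasure π ∧ π.map Prod.fst = P ∧ π.map Prod.snd = Q

/-- The quadratic transport cost of a coupling. -/
def QuadCost {d : ℕ} (π : Measure (Eucl d × Eucl d)) : ℝ≥0∞ :=
  ∫⁻ q, ENNReal.ofReal (‖q.1 - q.2‖ ^ 2) ∂π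

/-- Squared 2-Wasserstein distance `W₂(P,Q)²` (the OT cost for the quadratic cost). -/
def W2sq {d : ℕ} (P Q : Measure (Eucl d)) : ℝ≥0∞ :=
  ⨅ π ∈ {π : Measure (Eucl d × Eucl d) | IsCoupling π P Q}, QuadCost π

/-- `P ∈ 𝒫₂(ℝ^d)`: a Borel probability measure with finite second moment. -/
def MemP2 {d : ℕ} (P : Measure (Eucl d)) : Prop :=
  IsProbabilityMeasure P ∧ ∫⁻ ξ, ENNReal.ofReal (‖ξ‖ ^ 2) ∂P < ⊤

open ProbabilityTheory

section InnerProductSpace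

variable {E : Type*} [NormedAddCommGroup E] [InnerProductSpace ℝ E]

theorem mul_norm_sub_sq_add_mul_norm_sub_sq (t : ℝ) (x a b : E) :
    t * ‖x - a‖ ^ 2 + (1 - t) * ‖x - b‖ ^ 2
      = ‖x - (t • a + (1 - t) • b)‖ ^ 2 + t * (1 - t) * ‖a - b‖ ^ 2 := by
  have hx : x - (t • a + (1 - t) • b) = t • (x - a) + (1 - t) • (x - b) := by
    simp only [smul_sub, sub_smul, one_smul]; abel
  have hab : a - b = (x - b) - (x - a) := by abel
  rw [hx, hab, norm_add_sq_real, norm_sub_sq_real (x - b), norm_smul, norm_smul,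
    real_inner_smul_left, real_inner_smul_right, real_inner_comm (x - a), mul_pow, mul_pow,
    Real.norm_eq_abs, Real.norm_eq_abs, sq_abs, sq_abs]
  ring

theorem ofReal_mul_norm_sub_sq_le {t : ℝ} (ht : t ∈ Icc (0 : ℝ) 1) (x a b : E) :
    ENNReal.ofReal (t * (1 - t)) * ENNReal.ofReal (‖a - b‖ ^ 2)
      ≤ ENNReal.ofReal t * ENNReal.ofReal (‖x - a‖ ^ 2)
        + ENNReal.ofReal (1 - t) * ENNReal.ofReal (‖x - b‖ ^ 2) := by
  obtain ⟨ht₀, ht₁⟩ := ht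
  have ht₁' : 0 ≤ 1 - t := sub_nonneg.2 ht₁
  rw [← ENNReal.ofReal_mul (mul_nonneg ht₀ ht₁'), ← ENNReal.ofReal_mul ht₀,
    ← ENNReal.ofReal_mul ht₁', ← ENNReal.ofReal_add (by positivity) (by positivity)]
  refine ENNReal.ofReal_le_ofReal ?_
  linarith [mul_norm_sub_sq_add_mul_norm_sub_sq t x a b, sq_nonneg ‖x - (t • a + (1 - t) • b)‖]

theorem ofReal_norm_smul_add_smul_sq_le {t : ℝ} (ht : t ∈ Icc (0 : ℝ) 1) (a b : E) :
    ENNReal.ofReal (‖t • a + (1 - t) • b‖ ^ 2)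
      ≤ ENNReal.ofReal t * ENNReal.ofReal (‖a‖ ^ 2)
        + ENNReal.ofReal (1 - t) * ENNReal.ofReal (‖b‖ ^ 2) := by
  obtain ⟨ht₀, ht₁⟩ := ht
  have ht₁' : 0 ≤ 1 - t := sub_nonneg.2 ht₁
  rw [← ENNReal.ofReal_mul ht₀, ← ENNReal.ofReal_mul ht₁',
    ← ENNReal.ofReal_add (by positivity) (by positivity)]
  refine ENNReal.ofReal_le_ofReal ?_
  have h := mul_norm_sub_sq_add_mul_norm_sub_sq t 0 a b
  simp only [zero_sub, norm_neg] at h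
  nlinarith [mul_nonneg (mul_nonneg ht₀ ht₁') (sq_nonneg ‖a - b‖)]

end InnerProductSpace

/-- The gluing lemma: draw `x` from the common first marginal, then `y` and `z` independently
from the conditional laws of `γ₁` and `γ₂` given `x`. -/
theorem exists_gluing_of_fst_eq {X Y Z : Type*} [MeasurableSpace X] [MeasurableSpace Y]
    [MeasurableSpace Z] [StandardBorelSpace Y] [Nonempty Y] [StandardBorelSpace Z] [Nonempty Z]
    (γ₁ : Measure (X × Y)) (γ₂ : Measure (X × Z)) [IsFiniteMeasure γ₁] [IsFiniteMeasure γ₂]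
    (h : γ₁.fst = γ₂.fst) :
    ∃ μ : Measure (X × Y × Z),
      μ.map (Prod.map id Prod.fst) = γ₁ ∧ μ.map (Prod.map id Prod.snd) = γ₂ := by
  refine ⟨γ₁.fst ⊗ₘ (γ₁.condKernel ×ₖ γ₂.condKernel), ?_, ?_⟩
  · rw [← Measure.compProd_map measurable_fst, ← Kernel.fst_eq, Kernel.fst_prod,
      Measure.disintegrate]
  · rw [← Measure.compProd_map measurable_snd, ← Kernel.snd_eq, Kernel.snd_prod, h,
      Measure.disintegrate]

theorem isCoupling_map_prodMk {α X : Type*} [MeasurableSpace α] [MeasurableSpace X]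
    (ν : Measure α) [IsProbabilityMeasure ν] {f g : α → X} (hf : Measurable f)
    (hg : Measurable g) :
    IsCoupling (ν.map fun a => (f a, g a)) (ν.map f) (ν.map g) :=
  ⟨Measure.isProbabilityMeasure_map (hf.prodMk hg).aemeasurable, Measure.fst_map_prodMk hg,
    Measure.snd_map_prodMk hf⟩

section Wasserstein

variable {d : ℕ}

theorem W2sq_map_le {α : Type*} [MeasurableSpace α] (ν : Measure α) [IsProbabilityMeasure ν]
    {f g : α → Eucl d} (hf : Measurable f) (hg : Measurable g) :
    W2sq (ν.map f) (ν.map g) ≤ ∫⁻ a, ENNReal.ofReal (‖f a - g a‖ ^ 2) ∂ν :=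
  calc W2sq (ν.map f) (ν.map g) ≤ QuadCost (ν.map fun a => (f a, g a)) :=
        iInf₂_le (f := fun π _ => QuadCost π) _ (isCoupling_map_prodMk ν hf hg)
    _ = _ := lintegral_map (by fun_prop) (hf.prodMk hg)

/-- The product coupling makes the infimum nonempty, which matters for `a = 0`:
`0 * ⊤ = 0`, whereas an empty infimum is `⊤`. -/
theorem mul_W2sq_eq_iInf {P Q : Measure (Eucl d)} [IsProbabilityMeasure P]
    [IsProbabilityMeasure Q] {a : ℝ≥0∞} (ha : a ≠ ∞) :
    a * W2sq P Q = ⨅ π ∈ {π | IsCoupling π P Q}, a * QuadCost π := by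
  have : Nonempty {π | IsCoupling π P Q} :=
    ⟨P.prod Q, inferInstance, Measure.fst_prod, Measure.snd_prod⟩
  rw [W2sq, iInf_subtype', iInf_subtype', ENNReal.mul_iInf fun h => absurd h ha]

theorem lintegral_ofReal_norm_smul_sub_sq (π : Measure (Eucl d × Eucl d)) (c : ℝ) :
    ∫⁻ q, ENNReal.ofReal (‖c • (q.1 - q.2)‖ ^ 2) ∂π = ENNReal.ofReal (c ^ 2) * QuadCost π := by
  rw [QuadCost, ← lintegral_const_mul _ (by fun_prop)]
  simp_rw [norm_smul, mul_pow, Real.norm_eq_abs, sq_abs, ENNReal.ofReal_mul (sq_nonneg c)]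

theorem memP2_map_of_isCoupling {P₁ P₂ : Measure (Eucl d)} {π : Measure (Eucl d × Eucl d)}
    (hπ : IsCoupling π P₁ P₂) (hP₁ : MemP2 P₁) (hP₂ : MemP2 P₂) {t : ℝ}
    (ht : t ∈ Icc (0 : ℝ) 1) :
    MemP2 (π.map fun q : Eucl d × Eucl d => t • q.1 + (1 - t) • q.2) := by
  have := hπ.1
  refine ⟨Measure.isProbabilityMeasure_map (by fun_prop), ?_⟩
  rw [lintegral_map (by fun_prop) (by fun_prop)]
  calc ∫⁻ q, ENNReal.ofReal (‖t • q.1 + (1 - t) • q.2‖ ^ 2) ∂π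
      ≤ ∫⁻ q, (ENNReal.ofReal t * ENNReal.ofReal (‖q.1‖ ^ 2)
          + ENNReal.ofReal (1 - t) * ENNReal.ofReal (‖q.2‖ ^ 2)) ∂π :=
        lintegral_mono fun q => ofReal_norm_smul_add_smul_sq_le ht q.1 q.2
    _ = ENNReal.ofReal t * ∫⁻ ξ, ENNReal.ofReal (‖ξ‖ ^ 2) ∂P₁
          + ENNReal.ofReal (1 - t) * ∫⁻ ξ, ENNReal.ofReal (‖ξ‖ ^ 2) ∂P₂ := by
        rw [lintegral_add_left (by fun_prop), lintegral_const_mul _ (by fun_prop),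
          lintegral_const_mul _ (by fun_prop), ← hπ.2.1, ← hπ.2.2,
          lintegral_map (by fun_prop) measurable_fst, lintegral_map (by fun_prop) measurable_snd]
    _ < ∞ := by
        have := hP₁.2
        have := hP₂.2
        finiteness

theorem mul_W2sq_map_add_mul_W2sq_map_le {P₁ P₂ : Measure (Eucl d)}
    {π : Measure (Eucl d × Eucl d)} (hπ : IsCoupling π P₁ P₂) {t : ℝ} (ht : t ∈ Icc (0 : ℝ) 1) :
    ENNReal.ofReal t * W2sq (π.map fun q : Eucl d × Eucl d => t • q.1 + (1 - t) • q.2) P₁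
      + ENNReal.ofReal (1 - t) * W2sq (π.map fun q : Eucl d × Eucl d => t • q.1 + (1 - t) • q.2) P₂
      ≤ ENNReal.ofReal (t * (1 - t)) * QuadCost π := by
  have := hπ.1
  obtain ⟨ht₀, ht₁⟩ := ht
  have ht₁' : 0 ≤ 1 - t := sub_nonneg.2 ht₁
  have hT : Measurable fun q : Eucl d × Eucl d => t • q.1 + (1 - t) • q.2 := by fun_prop
  have h₁ : W2sq (π.map fun q : Eucl d × Eucl d => t • q.1 + (1 - t) • q.2) P₁
      ≤ ENNReal.ofReal ((t - 1) ^ 2) * QuadCost π := by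
    rw [← hπ.2.1, ← lintegral_ofReal_norm_smul_sub_sq]
    refine (W2sq_map_le π hT measurable_fst).trans_eq (lintegral_congr fun q => ?_)
    congr 3
    module
  have h₂ : W2sq (π.map fun q : Eucl d × Eucl d => t • q.1 + (1 - t) • q.2) P₂
      ≤ ENNReal.ofReal (t ^ 2) * QuadCost π := by
    rw [← hπ.2.2, ← lintegral_ofReal_norm_smul_sub_sq]
    refine (W2sq_map_le π hT measurable_snd).trans_eq (lintegral_congr fun q => ?_)
    congr 3
    module
  calc _ ≤ ENNReal.ofReal t * (ENNReal.ofReal ((t - 1) ^ 2) * QuadCost π)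
        + ENNReal.ofReal (1 - t) * (ENNReal.ofReal (t ^ 2) * QuadCost π) := by gcongr
    _ = ENNReal.ofReal (t * (1 - t)) * QuadCost π := by
      rw [← mul_assoc, ← mul_assoc, ← ENNReal.ofReal_mul ht₀, ← ENNReal.ofReal_mul ht₁',
        ← add_mul, ← ENNReal.ofReal_add (by positivity) (by positivity)]
      congr 2
      ring

theorem exists_isCoupling_mul_quadCost_le {P P₁ P₂ : Measure (Eucl d)}
    {γ₁ γ₂ : Measure (Eucl d × Eucl d)} (hγ₁ : IsCoupling γ₁ P P₁) (hγ₂ : IsCoupling γ₂ P P₂)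
    {t : ℝ} (ht : t ∈ Icc (0 : ℝ) 1) :
    ∃ π, IsCoupling π P₁ P₂ ∧ ENNReal.ofReal (t * (1 - t)) * QuadCost π
      ≤ ENNReal.ofReal t * QuadCost γ₁ + ENNReal.ofReal (1 - t) * QuadCost γ₂ := by
  have := hγ₁.1
  have := hγ₂.1
  obtain ⟨μ, hμ₁, hμ₂⟩ := exists_gluing_of_fst_eq γ₁ γ₂ (hγ₁.2.1.trans hγ₂.2.1.symm)
  have : IsProbabilityMeasure μ :=
    (Measure.isProbabilityMeasure_map_iff (by fun_prop)).1 (hμ₁ ▸ hγ₁.1)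
  refine ⟨μ.map Prod.snd, ⟨Measure.isProbabilityMeasure_map (by fun_prop), ?_, ?_⟩, ?_⟩
  · rw [← hγ₁.2.2, ← hμ₁, Measure.map_map (by fun_prop) (by fun_prop),
      Measure.map_map (by fun_prop) (by fun_prop)]
    rfl
  · rw [← hγ₂.2.2, ← hμ₂, Measure.map_map (by fun_prop) (by fun_prop),
      Measure.map_map (by fun_prop) (by fun_prop)]
    rfl
  · rw [← hμ₁, ← hμ₂, QuadCost, QuadCost, QuadCost, lintegral_map (by fun_prop) (by fun_prop),
      lintegral_map (by fun_prop) (by fun_prop), lintegral_map (by fun_prop) (by fun_prop),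
      ← lintegral_const_mul _ (by fun_prop), ← lintegral_const_mul _ (by fun_prop),
      ← lintegral_const_mul _ (by fun_prop), ← lintegral_add_left (by fun_prop)]
    exact lintegral_mono fun p => ofReal_mul_norm_sub_sq_le ht p.1 p.2.1 p.2.2

theorem mul_quadCost_le_mul_W2sq_add_mul_W2sq {P₁ P₂ : Measure (Eucl d)}
    [IsProbabilityMeasure P₁] [IsProbabilityMeasure P₂] {πstar : Measure (Eucl d × Eucl d)}
    (hπopt : ∀ π, IsCoupling π P₁ P₂ → QuadCost πstar ≤ QuadCost π)
    (P : Measure (Eucl d)) [IsProbabilityMeasure P] {t : ℝ} (ht : t ∈ Icc (0 : ℝ) 1) :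
    ENNReal.ofReal (t * (1 - t)) * QuadCost πstar
      ≤ ENNReal.ofReal t * W2sq P P₁ + ENNReal.ofReal (1 - t) * W2sq P P₂ := by
  rw [mul_W2sq_eq_iInf ENNReal.ofReal_ne_top, mul_W2sq_eq_iInf ENNReal.ofReal_ne_top]
  refine ENNReal.le_iInf₂_add_iInf₂ fun γ₁ hγ₁ γ₂ hγ₂ => ?_
  obtain ⟨π, hπ, hπcost⟩ := exists_isCoupling_mul_quadCost_le hγ₁ hγ₂ ht
  exact (mul_le_mul_right (hπopt π hπ) _).trans hπcost

end Wasserstein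

theorem wasserstein_barycenter_on_geodesic_general
    {d : ℕ} (P₁ P₂ : Measure (Eucl d))
    (hP₁ : MemP2 P₁) (hP₂ : MemP2 P₂)
    (lam : ℝ) (hlam : lam ∈ Set.Icc (0 : ℝ) 1)
    (πstar : Measure (Eucl d × Eucl d))
    (hπstar : IsCoupling πstar P₁ P₂)
    (hπopt : ∀ π : Measure (Eucl d × Eucl d), IsCoupling π P₁ P₂ →
      QuadCost πstar ≤ QuadCost π) :
    MemP2 (πstar.map (fun q : Eucl d × Eucl d => lam • q.1 + (1 - lam) • q.2)) ∧
    ∀ P : Measure (Eucl d), MemP2 P →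
      ENNReal.ofReal lam *
          W2sq (πstar.map (fun q : Eucl d × Eucl d => lam • q.1 + (1 - lam) • q.2)) P₁
        + ENNReal.ofReal (1 - lam) *
          W2sq (πstar.map (fun q : Eucl d × Eucl d => lam • q.1 + (1 - lam) • q.2)) P₂
      ≤ ENNReal.ofReal lam * W2sq P P₁ + ENNReal.ofReal (1 - lam) * W2sq P P₂ := by
  have := hP₁.1
  have := hP₂.1
  refine ⟨memP2_map_of_isCoupling hπstar hP₁ hP₂ hlam, fun P hP => ?_⟩
  have := hP.1
  exact (mul_W2sq_map_add_mul_W2sq_map_le hπstar hlam).trans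
    (mul_quadCost_le_mul_W2sq_add_mul_W2sq hπopt P hlam)

/-- **2-Wasserstein barycenters trace out geodesics.** -/
theorem wasserstein_barycenter_on_geodesic
    {d : ℕ} (P₁ P₂ : Measure (Eucl d))
    (hP₁ : MemP2 P₁) (hP₂ : MemP2 P₂)
    -- continuity: zero probability on every set of Hausdorff dimension `< d`
    (hcont₁ : ∀ s : Set (Eucl d), dimH s < d → P₁ s = 0)
    (hcont₂ : ∀ s : Set (Eucl d), dimH s < d → P₂ s = 0)
    (lam : ℝ) (hlam : lam ∈ Set.Icc (0 : ℝ) 1)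
    (πstar : Measure (Eucl d × Eucl d))
    (hπstar : IsCoupling πstar P₁ P₂)
    (hπopt : ∀ π : Measure (Eucl d × Eucl d), IsCoupling π P₁ P₂ →
      QuadCost πstar ≤ QuadCost π) :
    MemP2 (πstar.map (fun q : Eucl d × Eucl d => lam • q.1 + (1 - lam) • q.2)) ∧
    ∀ P : Measure (Eucl d), MemP2 P →
      ENNReal.ofReal lam *
          W2sq (πstar.map (fun q : Eucl d × Eucl d => lam • q.1 + (1 - lam) • q.2)) P₁
        + ENNReal.ofReal (1 - lam) *
          W2sq (πstar.map (fun q : Eucl d × Eucl d => lam • q.1 + (1 - lam) • q.2)) P₂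
      ≤ ENNReal.ofReal lam * W2sq P P₁ + ENNReal.ofReal (1 - lam) * W2sq P P₂ :=
  wasserstein_barycenter_on_geodesic_general P₁ P₂ hP₁ hP₂ lam hlam πstar hπstar hπopt

end
end

section
/- Let λ_1,…,λ_K > 0 with Σ_k λ_k = 1 and P_1,…,P_K ∈ 𝒫_2(ℝ^d). Define φ(ξ_1,…,ξ_K) = min over ξ ∈ ℝ^d of Σ_k λ_k‖ξ−ξ_k‖²₂ and Φ(ξ_1,…,ξ_K) = Σ_k λ_k ξ_k (the unique minimizer). Then for every multi-margin transportation plan π ∈ Π(P_1,…,P_K): Var_M(ξ) = E_π[φ(ξ_1,…,ξ_K)] + Var_{Φ_#π}(ξ), where M = Σ_k λ_k P_k is the mixture distribution. Consequently, a plan π* ∈ Π(P_1,…,P_K) minimizes E_π[φ] over Π(P_1,…,P_K) if and only if it maximizes Var_{Φ_#π}(ξ) over Π(P_1,…,P_K). -/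
/-! Parallel-axis identity: for weights summing to one and `m = ∑ λ_k ξ_k`,
`∑ λ_k ‖ξ - ξ_k‖² = ‖ξ - m‖² + ∑ λ_k ‖m - ξ_k‖²`, since the cross term is
`2 ⟪ξ - m, ∑ λ_k (m - ξ_k)⟫ = 0`. So `Φ` is the unique minimizer and the minimum is attained.
Taking `ξ` to be the mean of the mixture `M`, which is also the mean of `Φ_#π`, and integrating
against `π`, the marginal constraints turn the left-hand side into `Var_M`, the first term into
`Var_{Φ_#π}` and the second into `E_π[φ]`. As `Var_M` is finite and does not depend on `π`,
the two summands trade off exactly. -/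

open MeasureTheory ENNReal Set

noncomputable section

/-- `π ∈ Π(P_1,…,P_K)`: a multi-margin transportation plan with marginals `P k`. -/
def IsMultiCoupling {X : Type*} [MeasurableSpace X] {K : ℕ}
    (π : Measure (Fin K → X)) (P : Fin K → Measure X) : Prop :=
  IsProbabilityMeasure π ∧ ∀ k, π.map (fun x => x k) = P k

/-- `Var_P(ξ) = E_P[‖ξ − E_P[ξ]‖₂²]`. -/
def eVar {d : ℕ} (P : Measure (Eucl d)) : ℝ≥0∞ :=
  ∫⁻ ξ, ENNReal.ofReal (‖ξ - ∫ x, x ∂P‖ ^ 2) ∂P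

/-- `φ(ξ₁,…,ξ_K) = min_{ξ ∈ ℝ^d} ∑ k, λ_k ‖ξ − ξ_k‖₂²`. -/
def phiMin {d K : ℕ} (lam : Fin K → ℝ) (x : Fin K → Eucl d) : ℝ :=
  sInf (Set.range fun ξ : Eucl d => ∑ k, lam k * ‖ξ - x k‖ ^ 2)

section Barycenter

variable {E ι : Type*} [NormedAddCommGroup E] [InnerProductSpace ℝ E] [Fintype ι]

theorem sum_mul_norm_sub_sq_eq_norm_sub_barycenter_sq_add (w : ι → ℝ) (hw : ∑ i, w i = 1)
    (x : ι → E) (ξ : E) :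
    ∑ i, w i * ‖ξ - x i‖ ^ 2
      = ‖ξ - ∑ j, w j • x j‖ ^ 2 + ∑ i, w i * ‖(∑ j, w j • x j) - x i‖ ^ 2 := by
  set m : E := ∑ j, w j • x j
  have hcross : ∑ i, w i • (m - x i) = 0 := by
    simp only [smul_sub, Finset.sum_sub_distrib, ← Finset.sum_smul, hw, one_smul, sub_self, m]
  calc ∑ i, w i * ‖ξ - x i‖ ^ 2
      = ∑ i, (w i * ‖ξ - m‖ ^ 2 + 2 * inner ℝ (ξ - m) (w i • (m - x i))
          + w i * ‖m - x i‖ ^ 2) := by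
        refine Finset.sum_congr rfl fun i _ => ?_
        rw [← sub_add_sub_cancel ξ m (x i), norm_add_sq_real, real_inner_smul_right]
        ring
    _ = ‖ξ - m‖ ^ 2 + ∑ i, w i * ‖m - x i‖ ^ 2 := by
        rw [Finset.sum_add_distrib, Finset.sum_add_distrib, ← Finset.sum_mul, hw,
          ← Finset.mul_sum, ← inner_sum, hcross, inner_zero_right]
        ring

end Barycenter

theorem memLp_two_iff_lintegral_ofReal_norm_sq_lt_top {α F : Type*} [MeasurableSpace α]
    [NormedAddCommGroup F] {μ : Measure α} {f : α → F} (hf : AEStronglyMeasurable f μ) :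
    MemLp f 2 μ ↔ ∫⁻ a, ENNReal.ofReal (‖f a‖ ^ 2) ∂μ < ⊤ := by
  rw [memLp_two_iff_integrable_sq_norm hf, Integrable,
    hasFiniteIntegral_iff_ofReal (ae_of_all _ fun _ => sq_nonneg _)]
  exact and_iff_right (hf.norm.pow 2)

section Coupling

variable {X : Type*} [MeasurableSpace X] {K : ℕ} {π : Measure (Fin K → X)}
  {P : Fin K → Measure X}

theorem lintegral_sum_smul_measure_eq_of_map_eval (hπ : ∀ k, π.map (fun x => x k) = P k)
    (w : Fin K → ℝ≥0∞) {g : X → ℝ≥0∞} (hg : Measurable g) :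
    ∫⁻ ξ, g ξ ∂(∑ k, w k • P k) = ∫⁻ x, ∑ k, w k * g (x k) ∂π := by
  rw [lintegral_finsetSum_measure, lintegral_finsetSum _ fun k _ => by fun_prop]
  refine Finset.sum_congr rfl fun k _ => ?_
  rw [lintegral_smul_measure, ← hπ k, lintegral_map hg (measurable_pi_apply k),
    lintegral_const_mul _ (by fun_prop), smul_eq_mul]

theorem integral_sum_ofReal_smul_measure {E : Type*} [NormedAddCommGroup E] [NormedSpace ℝ E]
    {f : X → E} (lam : Fin K → ℝ) (hlam_nonneg : ∀ k, 0 ≤ lam k) (hf : ∀ k, Integrable f (P k)) :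
    ∫ ξ, f ξ ∂(∑ k, ENNReal.ofReal (lam k) • P k) = ∑ k, lam k • ∫ ξ, f ξ ∂(P k) := by
  rw [integral_finsetSum_measure fun k _ => (hf k).smul_measure ofReal_ne_top]
  refine Finset.sum_congr rfl fun k _ => ?_
  rw [integral_smul_measure, ENNReal.toReal_ofReal (hlam_nonneg k)]

theorem integral_map_sum_smul_eq_of_map_eval [NormedAddCommGroup X] [NormedSpace ℝ X]
    [BorelSpace X] [SecondCountableTopology X]
    (hπ : ∀ k, π.map (fun x => x k) = P k) (lam : Fin K → ℝ)
    (hP : ∀ k, Integrable (fun ξ => ξ) (P k)) :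
    ∫ ξ, ξ ∂(π.map fun x => ∑ k, lam k • x k) = ∑ k, lam k • ∫ ξ, ξ ∂(P k) := by
  have hint : ∀ k, Integrable (fun x => x k) π := fun k =>
    (integrable_map_measure aestronglyMeasurable_id (measurable_pi_apply k).aemeasurable).1
      (hπ k ▸ hP k)
  have hmeas : Measurable fun x : Fin K → X => ∑ k, lam k • x k := by fun_prop
  rw [integral_map (f := fun ξ : X => ξ) hmeas.aemeasurable aestronglyMeasurable_id,
    integral_finsetSum (f := fun k (x : Fin K → X) => lam k • x k) _
      fun k _ => (hint k).smul (lam k)]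
  refine Finset.sum_congr rfl fun k _ => ?_
  rw [integral_smul, ← hπ k, integral_map (φ := fun x : Fin K → X => x k)
    (f := fun ξ : X => ξ) (measurable_pi_apply k).aemeasurable aestronglyMeasurable_id]

end Coupling

theorem isMinOn_iff_isMaxOn_of_add_eq {α : Type*} {A B : α → ℝ≥0∞} {c : ℝ≥0∞} {s : Set α}
    (hc : c ≠ ⊤) (hAB : ∀ a ∈ s, A a + B a = c) {a₀ : α} (ha₀ : a₀ ∈ s) :
    IsMinOn A s a₀ ↔ IsMaxOn B s a₀ := by
  have hA : A a₀ ≠ ⊤ := ne_top_of_le_ne_top hc (hAB a₀ ha₀ ▸ le_self_add)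
  have hB : B a₀ ≠ ⊤ := ne_top_of_le_ne_top hc (hAB a₀ ha₀ ▸ le_add_self)
  refine ⟨fun h a ha => ?_, fun h a ha => ?_⟩
  · refine (ENNReal.add_le_add_iff_left hA).1 ?_
    calc A a₀ + B a ≤ A a + B a := add_le_add_left (h ha) _
      _ = A a₀ + B a₀ := (hAB a ha).trans (hAB a₀ ha₀).symm
  · refine (ENNReal.add_le_add_iff_right hB).1 ?_
    calc A a₀ + B a₀ = A a + B a := (hAB a₀ ha₀).trans (hAB a ha).symm
      _ ≤ A a + B a₀ := add_le_add_right (h ha) _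

section Euclidean

variable {d K : ℕ}

theorem phiMin_eq_sum_mul_norm_barycenter_sub_sq (lam : Fin K → ℝ) (hlam : ∑ k, lam k = 1)
    (x : Fin K → Eucl d) :
    phiMin lam x = ∑ k, lam k * ‖(∑ k', lam k' • x k') - x k‖ ^ 2 := by
  have hle : ∀ ξ : Eucl d, ∑ k, lam k * ‖(∑ k', lam k' • x k') - x k‖ ^ 2
      ≤ ∑ k, lam k * ‖ξ - x k‖ ^ 2 := fun ξ => by
    rw [sum_mul_norm_sub_sq_eq_norm_sub_barycenter_sq_add lam hlam x ξ]
    exact le_add_of_nonneg_left (sq_nonneg _)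
  exact le_antisymm (csInf_le ⟨_, forall_mem_range.2 hle⟩ (mem_range_self _))
    (le_csInf (range_nonempty _) (forall_mem_range.2 hle))

theorem eq_barycenter_of_sum_mul_norm_sub_sq_eq_phiMin (lam : Fin K → ℝ)
    (hlam : ∑ k, lam k = 1) (x : Fin K → Eucl d) (ξ : Eucl d)
    (hξ : ∑ k, lam k * ‖ξ - x k‖ ^ 2 = phiMin lam x) : ξ = ∑ k, lam k • x k := by
  rw [sum_mul_norm_sub_sq_eq_norm_sub_barycenter_sq_add lam hlam x ξ,
    phiMin_eq_sum_mul_norm_barycenter_sub_sq lam hlam x, add_eq_right] at hξ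
  simpa [sub_eq_zero] using hξ

theorem phiMin_nonneg (lam : Fin K → ℝ) (hlam_nonneg : ∀ k, 0 ≤ lam k)
    (hlam : ∑ k, lam k = 1) (x : Fin K → Eucl d) : 0 ≤ phiMin lam x := by
  rw [phiMin_eq_sum_mul_norm_barycenter_sub_sq lam hlam x]
  exact Finset.sum_nonneg fun k _ => mul_nonneg (hlam_nonneg k) (sq_nonneg _)

theorem measurable_phiMin (lam : Fin K → ℝ) (hlam : ∑ k, lam k = 1) :
    Measurable (phiMin (d := d) lam) := by
  rw [funext (phiMin_eq_sum_mul_norm_barycenter_sub_sq lam hlam)]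
  fun_prop

theorem MemP2.memLp_id {P : Measure (Eucl d)} (hP : MemP2 P) :
    MemLp (fun ξ => ξ) 2 P :=
  (memLp_two_iff_lintegral_ofReal_norm_sq_lt_top aestronglyMeasurable_id).2 hP.2

theorem MemP2.integrable_id {P : Measure (Eucl d)} (hP : MemP2 P) :
    Integrable (fun ξ => ξ) P :=
  have := hP.1
  hP.memLp_id.integrable one_le_two

theorem MemP2.eVar_ne_top {P : Measure (Eucl d)} (hP : MemP2 P) : eVar P ≠ ⊤ :=
  have := hP.1
  ((memLp_two_iff_lintegral_ofReal_norm_sq_lt_top (by fun_prop)).1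
    (hP.memLp_id.sub (memLp_const _))).ne

theorem MemP2.sum_smul {P : Fin K → Measure (Eucl d)} (hP : ∀ k, MemP2 (P k))
    (lam : Fin K → ℝ) (hlam_nonneg : ∀ k, 0 ≤ lam k) (hlam : ∑ k, lam k = 1) :
    MemP2 (∑ k, ENNReal.ofReal (lam k) • P k) := by
  refine ⟨⟨?_⟩, ?_⟩
  · simp only [Measure.coe_finsetSum, Finset.sum_apply, Measure.smul_apply,
      fun k => (hP k).1.measure_univ, smul_eq_mul, mul_one]
    rw [← ENNReal.ofReal_sum_of_nonneg fun k _ => hlam_nonneg k, hlam, ENNReal.ofReal_one]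
  · rw [lintegral_finsetSum_measure]
    exact ENNReal.sum_lt_top.2 fun k _ => by
      rw [lintegral_smul_measure]
      exact ENNReal.mul_lt_top ofReal_lt_top (hP k).2

theorem sum_ofReal_mul_ofReal_norm_sub_sq_eq (lam : Fin K → ℝ) (hlam_nonneg : ∀ k, 0 ≤ lam k)
    (hlam : ∑ k, lam k = 1) (x : Fin K → Eucl d) (μ : Eucl d) :
    ∑ k, ENNReal.ofReal (lam k) * ENNReal.ofReal (‖x k - μ‖ ^ 2)
      = ENNReal.ofReal (phiMin lam x) + ENNReal.ofReal (‖(∑ k, lam k • x k) - μ‖ ^ 2) := by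
  simp_rw [← ENNReal.ofReal_mul (hlam_nonneg _), norm_sub_rev _ μ]
  rw [← ENNReal.ofReal_sum_of_nonneg fun k _ => mul_nonneg (hlam_nonneg k) (sq_nonneg _),
    sum_mul_norm_sub_sq_eq_norm_sub_barycenter_sq_add lam hlam x μ,
    ← phiMin_eq_sum_mul_norm_barycenter_sub_sq lam hlam x, add_comm,
    ENNReal.ofReal_add (phiMin_nonneg lam hlam_nonneg hlam x) (sq_nonneg _)]

theorem eVar_sum_smul_eq_lintegral_phiMin_add_eVar_map {P : Fin K → Measure (Eucl d)}
    {π : Measure (Fin K → Eucl d)} (lam : Fin K → ℝ) (hlam_nonneg : ∀ k, 0 ≤ lam k)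
    (hlam : ∑ k, lam k = 1) (hP : ∀ k, Integrable (fun ξ => ξ) (P k))
    (hπ : ∀ k, π.map (fun x => x k) = P k) :
    eVar (∑ k, ENNReal.ofReal (lam k) • P k)
      = ∫⁻ x, ENNReal.ofReal (phiMin lam x) ∂π + eVar (π.map fun x => ∑ k, lam k • x k) := by
  have hΦ : Measurable fun x : Fin K → Eucl d => ∑ k, lam k • x k := by fun_prop
  set μ := ∑ k, lam k • ∫ ξ, ξ ∂(P k)
  have hg : Measurable fun ξ : Eucl d => ENNReal.ofReal (‖ξ - μ‖ ^ 2) := by fun_prop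
  rw [eVar, eVar, integral_sum_ofReal_smul_measure lam hlam_nonneg hP,
    integral_map_sum_smul_eq_of_map_eval hπ lam hP,
    lintegral_sum_smul_measure_eq_of_map_eval hπ _ hg, lintegral_map hg hΦ,
    ← lintegral_add_left (measurable_phiMin lam hlam).ennreal_ofReal]
  exact lintegral_congr fun x => sum_ofReal_mul_ofReal_norm_sub_sq_eq lam hlam_nonneg hlam x μ

end Euclidean

/-- **total variance decomposition for multi-margin plans.** -/
theorem total_variance_decomposition
    {d K : ℕ} (lam : Fin K → ℝ) (hlam_pos : ∀ k, 0 < lam k)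
    (hlam_sum : ∑ k, lam k = 1)
    (P : Fin K → Measure (Eucl d)) (hP : ∀ k, MemP2 (P k)) :
    -- `Φ(ξ₁,…,ξ_K) = ∑ k, λ_k ξ_k` is the unique minimizer defining `φ`:
    (∀ x : Fin K → Eucl d,
      (∑ k, lam k * ‖(∑ k', lam k' • x k') - x k‖ ^ 2 = phiMin lam x) ∧
      ∀ ξ : Eucl d, (∑ k, lam k * ‖ξ - x k‖ ^ 2 = phiMin lam x) →
        ξ = ∑ k', lam k' • x k') ∧
    -- the total variance decomposition:
    (∀ π : Measure (Fin K → Eucl d), IsMultiCoupling π P →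
      eVar (∑ k, ENNReal.ofReal (lam k) • P k)
        = (∫⁻ x, ENNReal.ofReal (phiMin lam x) ∂π)
          + eVar (π.map fun x : Fin K → Eucl d => ∑ k, lam k • x k)) ∧
    -- consequently, `π*` minimizes `E_π[φ]` iff it maximizes the variance of `Φ_#π`:
    (∀ πstar : Measure (Fin K → Eucl d), IsMultiCoupling πstar P →
      ((∀ π : Measure (Fin K → Eucl d), IsMultiCoupling π P →
          ∫⁻ x, ENNReal.ofReal (phiMin lam x) ∂πstar
            ≤ ∫⁻ x, ENNReal.ofReal (phiMin lam x) ∂π)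
        ↔ (∀ π : Measure (Fin K → Eucl d), IsMultiCoupling π P →
            eVar (π.map fun x : Fin K → Eucl d => ∑ k, lam k • x k)
              ≤ eVar (πstar.map fun x : Fin K → Eucl d => ∑ k, lam k • x k)))) := by
  have hlam_nonneg : ∀ k, 0 ≤ lam k := fun k => (hlam_pos k).le
  have hdecomp := fun (π : Measure (Fin K → Eucl d)) (hπ : IsMultiCoupling π P) =>
    eVar_sum_smul_eq_lintegral_phiMin_add_eVar_map lam hlam_nonneg hlam_sum
      (fun k => (hP k).integrable_id) hπ.2
  have hM : MemP2 (∑ k, ENNReal.ofReal (lam k) • P k) := MemP2.sum_smul hP lam hlam_nonneg hlam_sum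
  exact ⟨fun x => ⟨(phiMin_eq_sum_mul_norm_barycenter_sub_sq lam hlam_sum x).symm,
      eq_barycenter_of_sum_mul_norm_sub_sq_eq_phiMin lam hlam_sum x⟩,
    hdecomp,
    fun _ hπstar => isMinOn_iff_isMaxOn_of_add_eq hM.eVar_ne_top
      (fun π hπ => (hdecomp π hπ).symm) hπstar⟩

end
end
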